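/- arXiv:1405.1627 — 2 statements merged into one kernel-verified Lean document; each statement's English description precedes it below -/
import Mathlib

section
/- The number of reducible (over ℚ) integer polynomials of degree n ≥ 3 and height at most Q is O(Q^n) as Q → ∞, i.e., there is a constant c(n) such that #{p ∈ ℤ[x] : deg p = n, H(p) ≤ Q, p reducible over ℚ} ≤ c(n) Q^n for all Q ≥ 2. -/
open Polynomial Finset

/-- The (naive) height of an integer polynomial. -/
def polyHeight (p : Polynomial ℤ) : ℕ := p.support.sup fun i => (p.coeff i).natAbs

lemma natAbs_coeff_le (p : Polynomial ℤ) (i : ℕ) : (p.coeff i).natAbs ≤ polyHeight p := by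
  by_cases h : i ∈ p.support
  · exact Finset.le_sup (f := fun i => (p.coeff i).natAbs) h
  · simp [Polynomial.notMem_support_iff.mp h]

lemma one_le_polyHeight {p : Polynomial ℤ} (hp : p ≠ 0) : 1 ≤ polyHeight p := by
  have h := natAbs_coeff_le p p.natDegree
  have h2 : p.coeff p.natDegree ≠ 0 := by
    rw [← Polynomial.leadingCoeff]
    exact Polynomial.leadingCoeff_ne_zero.mpr hp
  have h3 : 0 < (p.coeff p.natDegree).natAbs := Int.natAbs_pos.mpr h2
  omega

lemma abs_coeff_le_polyHeight (p : Polynomial ℤ) (i : ℕ) :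
    |(p.coeff i : ℝ)| ≤ polyHeight p := by
  have h := natAbs_coeff_le p i
  calc |(p.coeff i : ℝ)| = ((p.coeff i).natAbs : ℝ) := by
        rw [Nat.cast_natAbs]; push_cast; ring_nf
    _ ≤ polyHeight p := by exact_mod_cast h

lemma polyHeight_le_of_forall {p : Polynomial ℤ} {c : ℝ} (hc : 0 ≤ c)
    (h : ∀ i ∈ p.support, ((p.coeff i).natAbs : ℝ) ≤ c) : (polyHeight p : ℝ) ≤ c := by
  rcases p.support.eq_empty_or_nonempty with he | hne
  · simp [polyHeight, he, hc]
  · obtain ⟨i, hi, hs⟩ := Finset.exists_mem_eq_sup _ hne fun i => (p.coeff i).natAbs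
    rw [polyHeight, hs]
    exact h i hi

lemma abs_eval_le (n : ℕ) (hn : 1 ≤ n) (p : Polynomial ℤ) (hd : p.natDegree ≤ n) (x : ℤ)
    (hx : x ∈ Finset.Icc (0:ℤ) (2*n)) :
    |((p.eval x : ℤ) : ℝ)| ≤ ((n+1) * (2*n)^n : ℝ) * polyHeight p := by
  have hev : p.eval x = ∑ i ∈ Finset.range (n+1), p.coeff i * x ^ i :=
    Polynomial.eval_eq_sum_range' (Nat.lt_succ_of_le hd) x
  rw [Finset.mem_Icc] at hx
  have hstep : ∀ i ∈ Finset.range (n+1), |(p.coeff i * x ^ i : ℝ)| ≤ ((2*n)^n : ℝ) * polyHeight p := by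
    intro i hi
    rw [abs_mul]
    have h1 : |(p.coeff i : ℝ)| ≤ polyHeight p := abs_coeff_le_polyHeight p i
    have h2 : |(x:ℝ)| ^ i ≤ ((2*n : ℝ)) ^ n := by
      have hxb : |(x:ℝ)| ≤ (2*n : ℝ) := by
        rw [abs_le]; constructor
        · have : (0:ℝ) ≤ (x:ℝ) := by exact_mod_cast hx.1
          have h2n : (0:ℝ) ≤ 2*(n:ℝ) := by positivity
          linarith
        · exact_mod_cast hx.2
      calc |(x:ℝ)| ^ i ≤ (2*n:ℝ) ^ i := pow_le_pow_left₀ (abs_nonneg _) hxb i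
        _ ≤ (2*n:ℝ) ^ n := by
            apply pow_le_pow_right₀
            · have : (1:ℝ) ≤ (n:ℝ) := by exact_mod_cast hn
              linarith
            · exact Nat.lt_succ_iff.mp (Finset.mem_range.mp hi)
    rw [abs_pow]
    calc |(p.coeff i : ℝ)| * |(x:ℝ)| ^ i ≤ (polyHeight p : ℝ) * ((2*n:ℝ))^n := by
          apply mul_le_mul h1 h2 (by positivity) (by positivity)
      _ = ((2*n)^n : ℝ) * polyHeight p := by ring
  calc |((p.eval x : ℤ) : ℝ)| = |∑ i ∈ Finset.range (n+1), (p.coeff i * x ^ i : ℝ)| := by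
        rw [hev]; push_cast; ring_nf
        exact congrArg _ (Finset.sum_congr rfl fun _ _ => mul_comm _ _)
    _ ≤ ∑ i ∈ Finset.range (n+1), |(p.coeff i * x ^ i : ℝ)| := Finset.abs_sum_le_sum_abs _ _
    _ ≤ ∑ _i ∈ Finset.range (n+1), ((2*n)^n : ℝ) * polyHeight p := Finset.sum_le_sum hstep
    _ = ((n+1) * (2*n)^n : ℝ) * polyHeight p := by
        rw [Finset.sum_const, Finset.card_range]; push_cast; ring

noncomputable def interpConst (n : ℕ) : ℝ :=
  1 + ((Finset.Icc (0:ℤ) (2*n)).powerset.sup' ⟨∅, Finset.empty_mem_powerset _⟩ fun S =>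
    ∑ x ∈ S, ∑ j ∈ Finset.range (n+1), |((Lagrange.basis S (fun t : ℤ => (t:ℚ)) x).coeff j : ℝ)|)

lemma one_le_interpConst (n : ℕ) : 1 ≤ interpConst n := by
  have h : (0:ℝ) ≤ (Finset.Icc (0:ℤ) (2*n)).powerset.sup' ⟨∅, Finset.empty_mem_powerset _⟩
      fun S => ∑ x ∈ S, ∑ j ∈ Finset.range (n+1),
        |((Lagrange.basis S (fun t : ℤ => (t:ℚ)) x).coeff j : ℝ)| := by
    refine le_trans (le_of_eq ?_) (Finset.le_sup' _ (Finset.empty_mem_powerset _))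
    simp
  unfold interpConst; linarith

lemma height_le_interp (n : ℕ) (S : Finset ℤ) (hS : S ⊆ Finset.Icc (0:ℤ) (2*n))
    (f : Polynomial ℤ) (hcard : f.natDegree < S.card) (hdn : f.natDegree ≤ n)
    (r : ℝ) (hr0 : 0 ≤ r) (hr : ∀ x ∈ S, |((f.eval x : ℤ) : ℝ)| ≤ r) :
    (polyHeight f : ℝ) ≤ interpConst n * r := by
  set v : ℤ → ℚ := fun t => (t:ℚ) with hv
  have hinj : Set.InjOn v S := fun a _ b _ h => by simpa [hv] using h
  set fQ := f.map (Int.castRingHom ℚ) with hfQ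
  have hdeg : fQ.degree < S.card := by
    have h1 : fQ.degree = f.degree := Polynomial.degree_map_eq_of_injective
      (fun a b h => by simpa using h) f
    rw [h1]
    exact lt_of_le_of_lt Polynomial.degree_le_natDegree (by exact_mod_cast hcard)
  have heq : fQ = Lagrange.interpolate S v fun x => fQ.eval (v x) :=
    Lagrange.eq_interpolate hinj hdeg
  have hcoeff : ∀ j : ℕ, ((f.coeff j : ℤ) : ℚ) =
      ∑ x ∈ S, ((f.eval x : ℤ) : ℚ) * (Lagrange.basis S v x).coeff j := by
    intro j
    have h1 : fQ.coeff j = (f.coeff j : ℚ) := by simp [hfQ]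
    rw [← h1]
    conv_lhs => rw [heq]
    rw [Lagrange.interpolate_apply, Polynomial.finset_sum_coeff]
    refine Finset.sum_congr rfl fun x hx => ?_
    rw [Polynomial.coeff_C_mul]
    congr 1
    show fQ.eval ((x : ℤ) : ℚ) = _
    rw [hfQ, Polynomial.eval_intCast_map]
    simp
  apply polyHeight_le_of_forall (mul_nonneg (le_trans zero_le_one (one_le_interpConst n)) hr0)
  intro j hj
  have hjn : j ∈ Finset.range (n+1) := by
    rw [Finset.mem_range]
    exact Nat.lt_succ_of_le (le_trans (Polynomial.le_natDegree_of_mem_supp j hj) hdn)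
  have habs : |((f.coeff j : ℤ) : ℝ)| ≤
      ∑ x ∈ S, r * |((Lagrange.basis S v x).coeff j : ℝ)| := by
    have h2 : ((f.coeff j : ℤ) : ℝ) = ∑ x ∈ S, ((f.eval x : ℤ) : ℝ) *
        ((Lagrange.basis S v x).coeff j : ℝ) := by
      have := hcoeff j
      have h3 := congrArg (fun q : ℚ => (q : ℝ)) this
      push_cast at h3 ⊢
      convert h3 using 2
    rw [h2]
    refine le_trans (Finset.abs_sum_le_sum_abs _ _) (Finset.sum_le_sum fun x hx => ?_)
    rw [abs_mul]
    exact mul_le_mul_of_nonneg_right (hr x hx) (abs_nonneg _)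
  have hKS : ∑ x ∈ S, |((Lagrange.basis S v x).coeff j : ℝ)| ≤ interpConst n := by
    have hle : ∀ x ∈ S, |((Lagrange.basis S v x).coeff j : ℝ)| ≤
        ∑ j' ∈ Finset.range (n+1), |((Lagrange.basis S v x).coeff j' : ℝ)| := by
      intro x hx
      exact Finset.single_le_sum (f := fun j' => |((Lagrange.basis S v x).coeff j' : ℝ)|)
        (fun i _ => abs_nonneg _) hjn
    calc ∑ x ∈ S, |((Lagrange.basis S v x).coeff j : ℝ)|
        ≤ ∑ x ∈ S, ∑ j' ∈ Finset.range (n+1), |((Lagrange.basis S v x).coeff j' : ℝ)| :=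
          Finset.sum_le_sum hle
      _ ≤ interpConst n := by
          unfold interpConst
          have := Finset.le_sup' (f := fun S' => ∑ x ∈ S', ∑ j' ∈ Finset.range (n+1),
            |((Lagrange.basis S' v x).coeff j' : ℝ)|) (Finset.mem_powerset.mpr hS)
          have h0 : (0:ℝ) ≤ 1 := zero_le_one
          linarith [this]
  have hnat : ((f.coeff j).natAbs : ℝ) = |((f.coeff j : ℤ) : ℝ)| := by
    rw [Nat.cast_natAbs]; push_cast; ring_nf
  rw [hnat]
  calc |((f.coeff j : ℤ) : ℝ)| ≤ ∑ x ∈ S, r * |((Lagrange.basis S v x).coeff j : ℝ)| := habs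
    _ = r * ∑ x ∈ S, |((Lagrange.basis S v x).coeff j : ℝ)| := by rw [Finset.mul_sum]
    _ ≤ r * interpConst n := mul_le_mul_of_nonneg_left hKS hr0
    _ = interpConst n * r := mul_comm _ _

noncomputable def heightConst (n : ℕ) : ℝ := 2 * ((n+1) * (2*n)^n) * (interpConst n)^2

lemma one_le_heightConst (n : ℕ) (hn : 1 ≤ n) : 1 ≤ heightConst n := by
  have h1 := one_le_interpConst n
  have hn' : (1:ℝ) ≤ (n:ℝ) := by exact_mod_cast hn
  have h3 : (1:ℝ) ≤ (2*(n:ℝ))^n := one_le_pow₀ (by linarith)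
  have h2 : (1:ℝ) ≤ ((n:ℝ)+1) * (2*n)^n := by nlinarith
  rw [heightConst]
  nlinarith

lemma key_product (n Q : ℕ) (hn : 3 ≤ n) (f g : Polynomial ℤ)
    (hf1 : 1 ≤ f.natDegree) (hg1 : 1 ≤ g.natDegree) (hsum : f.natDegree + g.natDegree = n)
    (hH : polyHeight (f * g) ≤ Q) :
    (polyHeight f : ℝ) * polyHeight g ≤ heightConst n * Q := by
  classical
  have hn1 : 1 ≤ n := by omega
  have hf0 : f ≠ 0 := fun h => by simp [h] at hf1
  have hg0 : g ≠ 0 := fun h => by simp [h] at hg1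
  set C0 : ℝ := ((n:ℝ)+1) * (2*n)^n with hC0
  set C1 : ℝ := interpConst n with hC1
  have hC1pos : (0:ℝ) < C1 := lt_of_lt_of_le zero_lt_one (one_le_interpConst n)
  set A : ℕ := polyHeight f with hA
  have hA1 : 1 ≤ A := one_le_polyHeight hf0
  have hApos : (0:ℝ) < A := by exact_mod_cast hA1
  set k := f.natDegree with hk
  set m := g.natDegree with hm
  set T : Finset ℤ := (Finset.Icc (0:ℤ) (2*n)).filter
    (fun x => |((f.eval x : ℤ) : ℝ)| ≤ (A:ℝ) / (2*C1)) with hT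
  have hTcard : T.card ≤ k := by
    by_contra hc
    push_neg at hc
    obtain ⟨S, hSsub, hScard⟩ := Finset.exists_subset_card_eq (Nat.succ_le_of_lt hc)
    have hint := height_le_interp n S
      (hSsub.trans (Finset.filter_subset _ _)) f (by rw [hScard]; omega) (by omega)
      ((A:ℝ)/(2*C1)) (by positivity)
      (fun x hx => (Finset.mem_filter.mp (hSsub hx)).2)
    rw [← hA] at hint
    have : (A:ℝ) ≤ (A:ℝ)/2 := by
      calc (A:ℝ) ≤ C1 * ((A:ℝ)/(2*C1)) := hint
        _ = (A:ℝ)/2 := by field_simp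
    linarith
  have hIcc : (Finset.Icc (0:ℤ) (2*(n:ℤ))).card = 2*n+1 := by
    rw [Int.card_Icc]
    simp
    omega
  have hT'card : m + 1 ≤ ((Finset.Icc (0:ℤ) (2*n)) \ T).card := by
    rw [Finset.card_sdiff_of_subset (Finset.filter_subset _ _), hIcc, ← hT]
    omega
  obtain ⟨S1, hS1sub, hS1card⟩ := Finset.exists_subset_card_eq hT'card
  have hgbound : ∀ x ∈ S1, |((g.eval x : ℤ) : ℝ)| ≤ 2 * C0 * C1 * Q / A := by
    intro x hx
    have hxmem := hS1sub hx
    rw [Finset.mem_sdiff] at hxmem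
    have hfx : (A:ℝ)/(2*C1) < |((f.eval x : ℤ) : ℝ)| := by
      by_contra hcon
      push_neg at hcon
      exact hxmem.2 (Finset.mem_filter.mpr ⟨hxmem.1, hcon⟩)
    have hfxpos : (0:ℝ) < |((f.eval x : ℤ) : ℝ)| := lt_of_lt_of_le (by positivity) hfx.le
    have hprod : |((f.eval x : ℤ) : ℝ)| * |((g.eval x : ℤ) : ℝ)| ≤ C0 * Q := by
      have hev := abs_eval_le n hn1 (f*g) (by rw [Polynomial.natDegree_mul hf0 hg0]; omega)
        x hxmem.1
      have hQ' : (polyHeight (f*g) : ℝ) ≤ Q := by exact_mod_cast hH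
      calc |((f.eval x : ℤ) : ℝ)| * |((g.eval x : ℤ) : ℝ)|
          = |(((f*g).eval x : ℤ) : ℝ)| := by
            rw [← abs_mul, Polynomial.eval_mul]; push_cast; ring_nf
        _ ≤ C0 * polyHeight (f*g) := hev
        _ ≤ C0 * Q := by
            have : (0:ℝ) ≤ C0 := by positivity
            nlinarith
    have h2 : |((g.eval x : ℤ) : ℝ)| ≤ C0 * Q / ((A:ℝ)/(2*C1)) := by
      rw [le_div_iff₀ (by positivity)]
      nlinarith [abs_nonneg ((g.eval x : ℤ) : ℝ)]
    calc |((g.eval x : ℤ) : ℝ)| ≤ C0 * Q / ((A:ℝ)/(2*C1)) := h2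
      _ = 2 * C0 * C1 * Q / A := by field_simp
  have hQ0 : (0:ℝ) ≤ (Q:ℝ) := Nat.cast_nonneg _
  have hC0pos : (0:ℝ) < C0 := by positivity
  have hgint := height_le_interp n S1
    (hS1sub.trans Finset.sdiff_subset) g (by rw [hS1card]; omega) (by omega) (2 * C0 * C1 * Q / A) (by positivity) hgbound
  calc (polyHeight f : ℝ) * polyHeight g = (A:ℝ) * polyHeight g := rfl
    _ ≤ (A:ℝ) * (C1 * (2 * C0 * C1 * Q / A)) :=
        mul_le_mul_of_nonneg_left hgint (le_of_lt hApos)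
    _ = 2 * C0 * C1^2 * Q := by field_simp
    _ = heightConst n * Q := by simp only [hC0, hC1, heightConst]; try ring

/-- An integer polynomial is reducible over ℚ if it factors into two polynomials
of positive degree with rational coefficients. -/
def ReducibleOverQ (p : Polynomial ℤ) : Prop :=
  ∃ f g : Polynomial ℚ, p.map (Int.castRingHom ℚ) = f * g ∧
    1 ≤ f.natDegree ∧ 1 ≤ g.natDegree

lemma exists_int_factorization (p : Polynomial ℤ) (hdeg : 1 ≤ p.natDegree)
    (hred : ReducibleOverQ p) :
    ∃ a b : Polynomial ℤ, p = a * b ∧ 1 ≤ a.natDegree ∧ 1 ≤ b.natDegree := by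
  obtain ⟨f, g, hfg, hf1, hg1⟩ := hred
  have hp0 : p ≠ 0 := fun h => by simp [h] at hdeg
  set q := p.primPart with hq
  have hqprim : q.IsPrimitive := p.isPrimitive_primPart
  have hqdeg : q.natDegree = p.natDegree := p.natDegree_primPart
  have hcont0 : p.content ≠ 0 := fun h => hp0 (Polynomial.content_eq_zero_iff.mp h)
  have hcQ : ((p.content : ℚ)) ≠ 0 := by exact_mod_cast hcont0
  have hqmap : q.map (Int.castRingHom ℚ) =
      Polynomial.C ((p.content : ℚ))⁻¹ * (f * g) := by
    have h1 : p.map (Int.castRingHom ℚ) =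
        Polynomial.C ((p.content : ℚ)) * q.map (Int.castRingHom ℚ) := by
      conv_lhs => rw [p.eq_C_content_mul_primPart]
      rw [Polynomial.map_mul, Polynomial.map_C]
      simp [hq]
    rw [← hfg, h1, ← mul_assoc, ← Polynomial.C_mul, inv_mul_cancel₀ hcQ]
    simp
  have hnotirr : ¬ Irreducible q := by
    intro hirr
    have hirrQ : Irreducible (q.map (Int.castRingHom ℚ)) :=
      (Polynomial.IsPrimitive.Int.irreducible_iff_irreducible_map_cast hqprim).mp hirr
    rw [hqmap, ← mul_assoc] at hirrQ
    rcases hirrQ.isUnit_or_isUnit rfl with hu | hu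
    · have := Polynomial.natDegree_eq_zero_of_isUnit hu
      rw [Polynomial.natDegree_C_mul (inv_ne_zero hcQ)] at this
      omega
    · have := Polynomial.natDegree_eq_zero_of_isUnit hu
      omega
  have hqnu : ¬ IsUnit q := by
    intro hu
    have := Polynomial.natDegree_eq_zero_of_isUnit hu
    omega
  rw [irreducible_iff] at hnotirr
  push_neg at hnotirr
  obtain ⟨a, b, hab, hanu, hbnu⟩ := hnotirr hqnu
  have hadeg : 1 ≤ a.natDegree := by
    by_contra hc
    push_neg at hc
    obtain ⟨x, hx⟩ := Polynomial.natDegree_eq_zero.mp (show a.natDegree = 0 by omega)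
    apply hanu
    rw [← hx]
    exact Polynomial.isUnit_C.mpr (hqprim x ⟨b, by rw [hab, hx]⟩)
  have hbdeg : 1 ≤ b.natDegree := by
    by_contra hc
    push_neg at hc
    obtain ⟨x, hx⟩ := Polynomial.natDegree_eq_zero.mp (show b.natDegree = 0 by omega)
    apply hbnu
    rw [← hx]
    exact Polynomial.isUnit_C.mpr (hqprim x ⟨a, by rw [hab, hx]; ring⟩)
  refine ⟨Polynomial.C p.content * a, b, ?_, ?_, hbdeg⟩
  · conv_lhs => rw [p.eq_C_content_mul_primPart]
    rw [← hq, hab]; ring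
  · rw [Polynomial.natDegree_C_mul hcont0]; exact hadeg

lemma sum_inv_sq_aux (N : ℕ) (h1 : 1 ≤ N) :
    ∑ A ∈ Finset.Icc 1 N, (((A:ℝ))^2)⁻¹ ≤ 2 - (N:ℝ)⁻¹ := by
  induction N with
  | zero => omega
  | succ M ih =>
    rcases Nat.eq_zero_or_pos M with hM | hM
    · subst hM; norm_num
    · have h2 := ih hM
      rw [Finset.sum_Icc_succ_top (by omega : 1 ≤ M + 1)]
      have hM1 : (1:ℝ) ≤ (M:ℝ) := by exact_mod_cast hM
      have hMpos : (0:ℝ) < (M:ℝ) := by linarith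
      have key : ((((M+1:ℕ)):ℝ)^2)⁻¹ ≤ (M:ℝ)⁻¹ - (((M+1:ℕ)):ℝ)⁻¹ := by
        push_cast
        have heq : (M:ℝ)⁻¹ - ((M:ℝ)+1)⁻¹ = ((M:ℝ)*((M:ℝ)+1))⁻¹ := by
          field_simp
          ring
        rw [heq]
        rw [inv_le_inv₀ (by positivity) (by positivity)]
        nlinarith
      push_cast at key h2 ⊢
      linarith

lemma sum_inv_sq_le (N : ℕ) : ∑ A ∈ Finset.Icc 1 N, (((A:ℝ))^2)⁻¹ ≤ 2 := by
  rcases Nat.eq_zero_or_pos N with h | h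
  · subst h; simp
  · have h2 := sum_inv_sq_aux N h
    have : (0:ℝ) < (N:ℝ)⁻¹ := by positivity
    linarith

lemma poly_eq_of_coeff_eq (n : ℕ) (f f' : Polynomial ℤ) (hf : f.natDegree ≤ n)
    (hf' : f'.natDegree ≤ n) (h : ∀ j : Fin (n+1), f.coeff (j:ℕ) = f'.coeff (j:ℕ)) :
    f = f' := by
  ext i
  rcases Nat.lt_or_ge i (n+1) with hi | hi
  · exact h ⟨i, hi⟩
  · rw [Polynomial.coeff_eq_zero_of_natDegree_lt (by omega),
      Polynomial.coeff_eq_zero_of_natDegree_lt (by omega)]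

lemma piFinset_card_le (n : ℕ) (c : Fin (n+1) → Finset ℤ) (P : Fin (n+1) → Prop)
    [DecidablePred P] (d M : ℕ) (hM : 1 ≤ M)
    (hcard : (Finset.univ.filter P).card ≤ d)
    (hc1 : ∀ j, ¬ P j → (c j).card = 1)
    (hcM : ∀ j, P j → (c j).card ≤ M) :
    (Fintype.piFinset c).card ≤ M ^ d := by
  rw [Fintype.card_piFinset]
  have h1 : ∏ j, (c j).card = ∏ j ∈ Finset.univ.filter P, (c j).card := by
    symm
    apply Finset.prod_subset (Finset.filter_subset _ _)
    intro x _ hx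
    exact hc1 x (by simpa using hx)
  rw [h1]
  calc ∏ j ∈ Finset.univ.filter P, (c j).card ≤ M ^ (Finset.univ.filter P).card :=
        Finset.prod_le_pow_card _ _ _ (fun j hj => hcM j (Finset.mem_filter.mp hj).2)
    _ ≤ M ^ d := Nat.pow_le_pow_right hM hcard

lemma filter_card_le_one (n d : ℕ) :
    (Finset.univ.filter fun j : Fin (n+1) => (j:ℕ) ≤ d).card ≤ d + 1 := by
  calc (Finset.univ.filter fun j : Fin (n+1) => (j:ℕ) ≤ d).card
      ≤ (Finset.range (d+1)).card := by
        refine Finset.card_le_card_of_injOn (fun j => (j:ℕ)) ?_ ?_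
        · intro j hj
          rw [Finset.mem_coe, Finset.mem_filter] at hj
          show (j:ℕ) ∈ Finset.range (d+1)
          rw [Finset.mem_range]
          omega
        · intro a _ b _ hab
          exact Fin.val_injective hab
    _ = d + 1 := Finset.card_range _

lemma filter_card_le_two (n d e : ℕ) (he : e ≤ d) :
    (Finset.univ.filter fun j : Fin (n+1) => ¬ d < (j:ℕ) ∧ (j:ℕ) ≠ e).card ≤ d := by
  have hcd : ((Finset.range (d+1)).erase e).card = d := by
    rw [Finset.card_erase_of_mem (Finset.mem_range.mpr (by omega)), Finset.card_range]
    omega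
  refine le_trans ?_ (le_of_eq hcd)
  refine Finset.card_le_card_of_injOn (fun j => (j:ℕ)) ?_ ?_
  · intro j hj
    rw [Finset.mem_coe, Finset.mem_filter] at hj
    show (j:ℕ) ∈ (Finset.range (d+1)).erase e
    rw [Finset.mem_erase, Finset.mem_range]
    exact ⟨hj.2.2, by omega⟩
  · intro a _ b _ hab
    exact Fin.val_injective hab

lemma sum_term_le (n k N : ℕ) (K Qr : ℝ) (hK : 1 ≤ K) (hQ : 1 ≤ Qr) (hn : 3 ≤ n)
    (hk1 : 1 ≤ k) (hk2 : k + 1 ≤ n) (hN : (N:ℝ) ≤ K * Qr) (B : ℕ → ℕ)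
    (hB : ∀ A, 1 ≤ A → A ≤ N → (B A : ℝ) ≤ K * Qr / A) :
    ∑ A ∈ Finset.Icc 1 N, ((2*A+1:ℕ):ℝ)^k * ((2*(B A)+1:ℕ):ℝ)^(n-k+1)
      ≤ 2 * 3^(n+1) * K^n * Qr^n := by
  set u : ℝ := K * Qr with hu
  have hu1 : (1:ℝ) ≤ u := by nlinarith
  have hu0 : (0:ℝ) < u := by linarith
  set m1 : ℕ := n - k + 1 with hm1
  have hkm1 : k + m1 = n + 1 := by omega
  -- pointwise bound
  have hpoint : ∀ A ∈ Finset.Icc 1 N, ((2*A+1:ℕ):ℝ)^k * ((2*(B A)+1:ℕ):ℝ)^m1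
      ≤ 3^(n+1) * (((A:ℝ))^k * (u^m1 / ((A:ℝ))^m1)) := by
    intro A hA
    rw [Finset.mem_Icc] at hA
    have hA1 : (1:ℝ) ≤ (A:ℝ) := by exact_mod_cast hA.1
    have hA0 : (0:ℝ) < (A:ℝ) := by linarith
    have hAu : (A:ℝ) ≤ u := le_trans (by exact_mod_cast hA.2) hN
    have huA1 : (1:ℝ) ≤ u / A := (one_le_div hA0).mpr hAu
    have h1 : ((2*A+1:ℕ):ℝ) ≤ 3 * A := by push_cast; linarith
    have h2 : ((2*(B A)+1:ℕ):ℝ) ≤ 3 * (u / A) := by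
      have := hB A hA.1 hA.2
      push_cast
      rw [hu] at this ⊢
      linarith
    calc ((2*A+1:ℕ):ℝ)^k * ((2*(B A)+1:ℕ):ℝ)^m1
        ≤ (3*(A:ℝ))^k * (3*(u/A))^m1 := by
          apply mul_le_mul (pow_le_pow_left₀ (by positivity) h1 k)
            (pow_le_pow_left₀ (by positivity) h2 m1) (by positivity) (by positivity)
      _ = 3^k * 3^m1 * ((A:ℝ)^k * (u^m1 / (A:ℝ)^m1)) := by
          rw [mul_pow, mul_pow, div_pow]; ring
      _ = 3^(n+1) * ((A:ℝ)^k * (u^m1 / (A:ℝ)^m1)) := by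
          rw [← pow_add, hkm1]
  have hsum := Finset.sum_le_sum hpoint
  refine le_trans hsum ?_
  rcases Nat.lt_or_ge k 2 with hk | hk
  · -- k = 1, m1 = n
    have hk1' : k = 1 := by omega
    have hm1n : m1 = n := by omega
    subst hk1'
    rw [hm1n]
    have hterm : ∀ A ∈ Finset.Icc 1 N, (3:ℝ)^(n+1) * (((A:ℝ))^1 * (u^n / ((A:ℝ))^n))
        ≤ 3^(n+1) * u^n * (((A:ℝ))^2)⁻¹ := by
      intro A hA
      rw [Finset.mem_Icc] at hA
      have hA1 : (1:ℝ) ≤ (A:ℝ) := by exact_mod_cast hA.1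
      have hA0 : (0:ℝ) < (A:ℝ) := by linarith
      have hfrac : (A:ℝ) / (A:ℝ)^n ≤ (((A:ℝ))^2)⁻¹ := by
        rw [div_le_iff₀ (by positivity)]
        have hsplit : ((A:ℝ))^n = ((A:ℝ))^2 * ((A:ℝ))^(n-2) := by
          rw [← pow_add]; congr 1; omega
        rw [hsplit, ← mul_assoc, inv_mul_cancel₀ (by positivity), one_mul]
        calc (A:ℝ) = (A:ℝ)^1 := (pow_one _).symm
          _ ≤ ((A:ℝ))^(n-2) := pow_le_pow_right₀ hA1 (by omega)
      calc (3:ℝ)^(n+1) * (((A:ℝ))^1 * (u^n / ((A:ℝ))^n))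
          = 3^(n+1) * u^n * ((A:ℝ) / ((A:ℝ))^n) := by ring
        _ ≤ 3^(n+1) * u^n * (((A:ℝ))^2)⁻¹ := by
            apply mul_le_mul_of_nonneg_left hfrac (by positivity)
    refine le_trans (Finset.sum_le_sum hterm) ?_
    rw [← Finset.mul_sum]
    calc (3:ℝ)^(n+1) * u^n * ∑ A ∈ Finset.Icc 1 N, (((A:ℝ))^2)⁻¹
        ≤ 3^(n+1) * u^n * 2 := by
          apply mul_le_mul_of_nonneg_left (sum_inv_sq_le N) (by positivity)
      _ = 2 * 3^(n+1) * K^n * Qr^n := by rw [hu, mul_pow]; ring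
  · -- k ≥ 2
    have hterm : ∀ A ∈ Finset.Icc 1 N, (3:ℝ)^(n+1) * (((A:ℝ))^k * (u^m1 / ((A:ℝ))^m1))
        ≤ 3^(n+1) * (u^m1 * u^(k-2)) := by
      intro A hA
      rw [Finset.mem_Icc] at hA
      have hA1 : (1:ℝ) ≤ (A:ℝ) := by exact_mod_cast hA.1
      have hA0 : (0:ℝ) < (A:ℝ) := by linarith
      have hAu : (A:ℝ) ≤ u := le_trans (by exact_mod_cast hA.2) hN
      have hfrac : ((A:ℝ))^k / ((A:ℝ))^m1 ≤ ((A:ℝ))^(k-2) := by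
        rw [div_le_iff₀ (by positivity), ← pow_add]
        exact pow_le_pow_right₀ hA1 (by omega)
      have h3 : ((A:ℝ))^(k-2) ≤ u^(k-2) := pow_le_pow_left₀ (by positivity) hAu _
      calc (3:ℝ)^(n+1) * (((A:ℝ))^k * (u^m1 / ((A:ℝ))^m1))
          = 3^(n+1) * (u^m1 * (((A:ℝ))^k / ((A:ℝ))^m1)) := by ring
        _ ≤ 3^(n+1) * (u^m1 * u^(k-2)) := by
            apply mul_le_mul_of_nonneg_left ?_ (by positivity)
            apply mul_le_mul_of_nonneg_left (le_trans hfrac h3) (by positivity)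
    refine le_trans (Finset.sum_le_sum hterm) ?_
    rw [Finset.sum_const, Nat.card_Icc]
    simp only [nsmul_eq_mul]
    have hcard : ((N + 1 - 1 : ℕ):ℝ) ≤ u := by
      simpa using hN
    calc ((N + 1 - 1 : ℕ):ℝ) * (3^(n+1) * (u^m1 * u^(k-2)))
        ≤ u * (3^(n+1) * (u^m1 * u^(k-2))) := by
          apply mul_le_mul_of_nonneg_right hcard (by positivity)
      _ = 3^(n+1) * (u^m1 * u^(k-2) * u^1) := by ring
      _ = 3^(n+1) * u^n := by rw [← pow_add, ← pow_add]; congr 2; omega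
      _ ≤ 2 * 3^(n+1) * K^n * Qr^n := by
          rw [hu, mul_pow]
          have hX : (0:ℝ) ≤ K^n * Qr^n := by positivity
          have h3 : (0:ℝ) ≤ (3:ℝ)^(n+1) := by positivity
          nlinarith

def factData (n : ℕ) (p : Polynomial ℤ) : Prop :=
  ∃ w : Polynomial ℤ × Polynomial ℤ, p = w.1 * w.2 ∧ 1 ≤ w.1.natDegree ∧
    1 ≤ w.2.natDegree ∧ w.1.natDegree + w.2.natDegree = n

open Classical in
noncomputable def phi (n : ℕ) (p : Polynomial ℤ) : (Fin (n+1) → ℤ) × (Fin (n+1) → ℤ) :=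
  if h : factData n p then
    (fun j : Fin (n+1) => (h.choose.1.coeff (j:ℕ)),
     fun j : Fin (n+1) => (h.choose.2.coeff (j:ℕ))) else 0

lemma phi_spec (n : ℕ) (p : Polynomial ℤ) (h : factData n p) :
    ∃ f g : Polynomial ℤ, p = f * g ∧ 1 ≤ f.natDegree ∧ 1 ≤ g.natDegree ∧
      f.natDegree + g.natDegree = n ∧
      phi n p = (fun j : Fin (n+1) => f.coeff (j:ℕ),
        fun j : Fin (n+1) => g.coeff (j:ℕ)) := by
  refine ⟨h.choose.1, h.choose.2, h.choose_spec.1, h.choose_spec.2.1,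
    h.choose_spec.2.2.1, h.choose_spec.2.2.2, ?_⟩
  unfold phi
  rw [dif_pos h]

lemma factData_of_mem (n Q : ℕ) (hn : 3 ≤ n) (p : Polynomial ℤ)
    (hp : p.natDegree = n ∧ polyHeight p ≤ Q ∧ ReducibleOverQ p) : factData n p := by
  obtain ⟨hdeg, _, hred⟩ := hp
  obtain ⟨a, b, hab, ha, hb⟩ := exists_int_factorization p (by omega) hred
  have ha0 : a ≠ 0 := fun h => by simp [h] at ha
  have hb0 : b ≠ 0 := fun h => by simp [h] at hb
  refine ⟨(a, b), hab, ha, hb, ?_⟩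
  rw [← Polynomial.natDegree_mul ha0 hb0, ← hab, hdeg]

theorem count_reducible_deg_ge_three (n : ℕ) (hn : 3 ≤ n) :
    ∃ c : ℝ, ∀ Q : ℕ, 2 ≤ Q →
      (Set.ncard {p : Polynomial ℤ | p.natDegree = n ∧ polyHeight p ≤ Q ∧
          ReducibleOverQ p} : ℝ) ≤ c * (Q : ℝ) ^ n := by
  classical
  set K : ℝ := heightConst n with hKdef
  have hK1 : 1 ≤ K := one_le_heightConst n (by omega)
  refine ⟨(n:ℝ) * (2*((n:ℝ)+1)) * (2 * 3^(n+1) * K^n), ?_⟩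
  intro Q hQ
  set P : Set (Polynomial ℤ) := {p : Polynomial ℤ | p.natDegree = n ∧ polyHeight p ≤ Q ∧
      ReducibleOverQ p} with hP
  have hQr1 : (1:ℝ) ≤ (Q:ℝ) := by exact_mod_cast (by omega : 1 ≤ Q)
  have hKQpos : (0:ℝ) < K * Q := by nlinarith
  set N : ℕ := ⌊K * (Q:ℝ)⌋₊ with hNdef
  set B : ℕ → ℕ := fun A => ⌊K * (Q:ℝ) / (A:ℝ)⌋₊ with hBdef
  set F : (ℕ × ℕ) × ℕ × ℤ → Finset ((Fin (n+1) → ℤ) × (Fin (n+1) → ℤ)) := fun x =>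
    (Fintype.piFinset fun j : Fin (n+1) => if x.1.1 < (j:ℕ) then ({0} : Finset ℤ)
        else if (j:ℕ) = min x.2.1 x.1.1 then {x.2.2 * (x.1.2:ℤ)}
        else Finset.Icc (-(x.1.2:ℤ)) (x.1.2:ℤ)) ×ˢ
    (Fintype.piFinset fun j : Fin (n+1) => if (j:ℕ) ≤ n - x.1.1 then
        Finset.Icc (-(B x.1.2 : ℤ)) ((B x.1.2 : ℤ)) else ({0} : Finset ℤ)) with hFdef
  set s' : Finset ((ℕ × ℕ) × ℕ × ℤ) :=
    (Finset.Icc 1 (n-1) ×ˢ Finset.Icc 1 N) ×ˢ (Finset.Icc 0 n ×ˢ ({-1,1} : Finset ℤ))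
    with hs'def
  -- step 1 : injection
  have hstep1 : (Set.ncard P) ≤ (s'.biUnion F).card := by
    rw [← Set.ncard_coe_finset]
    apply Set.ncard_le_ncard_of_injOn (phi n)
    · -- maps to
      intro p hp
      have hfact := factData_of_mem n Q hn p hp
      obtain ⟨f, g, hfg, hf1, hg1, hsum, hphi⟩ := phi_spec n p hfact
      have hf0 : f ≠ 0 := fun h => by simp [h] at hf1
      have hg0 : g ≠ 0 := fun h => by simp [h] at hg1
      set k := f.natDegree with hk
      set A := polyHeight f with hA
      have hA1 : 1 ≤ A := one_le_polyHeight hf0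
      have hA0 : (0:ℝ) < (A:ℝ) := by exact_mod_cast hA1
      have hkey : (A:ℝ) * (polyHeight g : ℝ) ≤ K * Q := by
        have := key_product n Q hn f g hf1 hg1 hsum (by rw [← hfg]; exact hp.2.1)
        exact this
      have hg1N : 1 ≤ polyHeight g := one_le_polyHeight hg0
      have hAKQ : (A:ℝ) ≤ K * Q := by
        have h1 : (1:ℝ) ≤ (polyHeight g : ℝ) := by exact_mod_cast hg1N
        nlinarith
      have hAN : A ≤ N := Nat.le_floor hAKQ
      have hHgB : polyHeight g ≤ B A := by
        apply Nat.le_floor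
        rw [le_div_iff₀ hA0]
        nlinarith
      obtain ⟨i₀, hi₀mem, hi₀⟩ := Finset.exists_mem_eq_sup f.support
        (Polynomial.nonempty_support_iff.mpr hf0) (fun i => (f.coeff i).natAbs)
      have hi₀k : i₀ ≤ k := Polynomial.le_natDegree_of_mem_supp i₀ hi₀mem
      have hi₀A : (f.coeff i₀).natAbs = A := hi₀.symm
      set ε : ℤ := if 0 ≤ f.coeff i₀ then 1 else -1 with hε
      rw [Finset.mem_coe]
      apply Finset.mem_biUnion.mpr
      refine ⟨((k, A), (i₀, ε)), ?_, ?_⟩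
      · rw [hs'def]
        simp only [Finset.mem_product, Finset.mem_Icc, Finset.mem_insert,
          Finset.mem_singleton]
        refine ⟨⟨⟨hf1, by omega⟩, ⟨hA1, hAN⟩⟩, ⟨⟨by omega, by omega⟩, ?_⟩⟩
        rw [hε]; split_ifs <;> simp
      · rw [hphi, hFdef]
        rw [Finset.mem_product]
        constructor
        · rw [Fintype.mem_piFinset]
          intro j
          simp only
          split_ifs with h1 h2
          · rw [Finset.mem_singleton]
            exact Polynomial.coeff_eq_zero_of_natDegree_lt (by omega)
          · rw [Finset.mem_singleton]
            have hjm : (j:ℕ) = i₀ := by omega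
            rw [hjm, hε]
            have := hi₀A
            split_ifs with hs <;> omega
          · rw [Finset.mem_Icc]
            have := natAbs_coeff_le f (j:ℕ)
            omega
        · rw [Fintype.mem_piFinset]
          intro j
          simp only
          split_ifs with h1
          · rw [Finset.mem_Icc]
            have h2 := natAbs_coeff_le g (j:ℕ)
            have h3 := hHgB
            omega
          · rw [Finset.mem_singleton]
            exact Polynomial.coeff_eq_zero_of_natDegree_lt (by omega)
    · -- injective
      intro p hp p' hp' heq
      have hfact := factData_of_mem n Q hn p hp
      have hfact' := factData_of_mem n Q hn p' hp'
      obtain ⟨f, g, hfg, hf1, hg1, hsum, hphi⟩ := phi_spec n p hfact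
      obtain ⟨f', g', hfg', hf1', hg1', hsum', hphi'⟩ := phi_spec n p' hfact'
      rw [hphi, hphi'] at heq
      have h1 : f = f' := by
        apply poly_eq_of_coeff_eq n _ _ (by omega) (by omega)
        intro j
        exact congrFun (congrArg Prod.fst heq) j
      have h2 : g = g' := by
        apply poly_eq_of_coeff_eq n _ _ (by omega) (by omega)
        intro j
        exact congrFun (congrArg Prod.snd heq) j
      rw [hfg, hfg', h1, h2]
  -- step 2 : cardinality bound per index
  have hstep3 : ∀ x ∈ s', (F x).card ≤
      (2*x.1.2+1)^x.1.1 * (2*(B x.1.2)+1)^(n-x.1.1+1) := by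
    intro x _
    obtain ⟨⟨k, A⟩, i, ε⟩ := x
    simp only [hFdef]
    rw [Finset.card_product]
    apply Nat.mul_le_mul
    · apply piFinset_card_le n _ (fun j : Fin (n+1) => ¬ k < (j:ℕ) ∧ (j:ℕ) ≠ min i k)
        k (2*A+1) (by omega) (filter_card_le_two n k (min i k) (min_le_right i k))
      · intro j hnP
        by_cases h1 : k < (j:ℕ)
        · simp [h1]
        · have h2 : (j:ℕ) = min i k := by tauto
          simp [h1, h2]
      · intro j hP
        rw [if_neg (by omega), if_neg hP.2, Int.card_Icc]
        omega
    · apply piFinset_card_le n _ (fun j : Fin (n+1) => (j:ℕ) ≤ n - k)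
        (n-k+1) (2*(B A)+1) (by omega) (filter_card_le_one n (n-k))
      · intro j hnP
        rw [if_neg hnP]
        simp
      · intro j hP
        rw [if_pos hP, Int.card_Icc]
        omega
  -- step 3 : real assembly
  set gb : ℕ × ℕ → ℝ := fun ka =>
    ((2*ka.2+1:ℕ):ℝ)^ka.1 * ((2*(B ka.2)+1:ℕ):ℝ)^(n-ka.1+1) with hgb
  have hgb0 : ∀ ka, 0 ≤ gb ka := by
    intro ka
    rw [hgb]
    positivity
  have hNle : ((N:ℕ):ℝ) ≤ K * Q := Nat.floor_le (le_of_lt hKQpos)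
  have hBle : ∀ A : ℕ, 1 ≤ A → A ≤ N → ((B A : ℕ):ℝ) ≤ K * Q / A := by
    intro A h1 _
    apply Nat.floor_le
    have : (0:ℝ) < (A:ℝ) := by exact_mod_cast h1
    positivity
  have hinner : ∀ k ∈ Finset.Icc 1 (n-1),
      ∑ A ∈ Finset.Icc 1 N, gb (k, A) ≤ 2 * 3^(n+1) * K^n * (Q:ℝ)^n := by
    intro k hk
    rw [Finset.mem_Icc] at hk
    exact sum_term_le n k N K (Q:ℝ) hK1 hQr1 hn hk.1 (by omega) hNle B hBle
  have hcard2 : ((Finset.Icc 0 n ×ˢ ({-1,1} : Finset ℤ)).card : ℝ) = 2*((n:ℝ)+1) := by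
    rw [Finset.card_product, Nat.card_Icc]
    have h2 : ({-1,1} : Finset ℤ).card = 2 := by decide
    rw [h2]
    push_cast
    ring
  calc (Set.ncard P : ℝ) ≤ ((s'.biUnion F).card : ℝ) := by exact_mod_cast hstep1
    _ ≤ ∑ x ∈ s', ((F x).card : ℝ) := by
        have := Finset.card_biUnion_le (s := s') (t := F)
        push_cast
        exact_mod_cast this
    _ ≤ ∑ x ∈ s', gb x.1 := by
        apply Finset.sum_le_sum
        intro x hx
        have h := hstep3 x hx
        rw [hgb]
        calc ((F x).card : ℝ) ≤ (((2*x.1.2+1)^x.1.1 * (2*(B x.1.2)+1)^(n-x.1.1+1) : ℕ) : ℝ) := by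
              exact_mod_cast h
          _ = ((2*x.1.2+1:ℕ):ℝ)^x.1.1 * ((2*(B x.1.2)+1:ℕ):ℝ)^(n-x.1.1+1) := by push_cast; ring
    _ = ∑ ka ∈ Finset.Icc 1 (n-1) ×ˢ Finset.Icc 1 N,
          ∑ _ie ∈ Finset.Icc 0 n ×ˢ ({-1,1} : Finset ℤ), gb ka := by
        rw [hs'def, Finset.sum_product]
    _ = ∑ ka ∈ Finset.Icc 1 (n-1) ×ˢ Finset.Icc 1 N, (2*((n:ℝ)+1)) * gb ka := by
        apply Finset.sum_congr rfl
        intro ka _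
        rw [Finset.sum_const, nsmul_eq_mul, hcard2]
    _ = (2*((n:ℝ)+1)) * ∑ ka ∈ Finset.Icc 1 (n-1) ×ˢ Finset.Icc 1 N, gb ka := by
        rw [Finset.mul_sum]
    _ = (2*((n:ℝ)+1)) * ∑ k ∈ Finset.Icc 1 (n-1), ∑ A ∈ Finset.Icc 1 N, gb (k, A) := by
        rw [Finset.sum_product]
    _ ≤ (2*((n:ℝ)+1)) * ∑ _k ∈ Finset.Icc 1 (n-1), 2 * 3^(n+1) * K^n * (Q:ℝ)^n := by
        apply mul_le_mul_of_nonneg_left (Finset.sum_le_sum hinner) (by positivity)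
    _ ≤ (n:ℝ) * (2*((n:ℝ)+1)) * (2 * 3^(n+1) * K^n) * (Q:ℝ)^n := by
        rw [Finset.sum_const, nsmul_eq_mul, Nat.card_Icc]
        have hc : ((n - 1 + 1 - 1 : ℕ):ℝ) ≤ (n:ℝ) := by
          have : (n - 1 + 1 - 1 : ℕ) ≤ n := by omega
          exact_mod_cast this
        have hE : (0:ℝ) ≤ 2 * 3^(n+1) * K^n * (Q:ℝ)^n := by positivity
        have h2n : (0:ℝ) ≤ 2*((n:ℝ)+1) := by positivity
        have hMX := mul_le_mul_of_nonneg_right hc hE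
        nlinarith [mul_le_mul_of_nonneg_left hMX h2n]
end

section
/- The number of reducible (over ℚ) integer polynomials of degree 2 and height at most Q is O(Q² log Q) as Q → ∞. -/
open Polynomial

def Good (p : Polynomial ℤ) (t : ℤ × ℤ × ℤ × ℤ) : Prop :=
  1 ≤ t.1 ∧ t.2.2.1 ≠ 0 ∧ t.1 * t.2.2.1 = p.coeff 2 ∧
    t.1 * t.2.2.2 + t.2.1 * t.2.2.1 = p.coeff 1 ∧ t.2.1 * t.2.2.2 = p.coeff 0

lemma exists_good (p : Polynomial ℤ) (h2 : p.natDegree = 2) (hred : ReducibleOverQ p) :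
    ∃ t, Good p t := by
  obtain ⟨f, g, hfg, hf, hg⟩ := hred
  have hp0 : p ≠ 0 := fun h => by simp [h] at h2
  have hm : (p.map (Int.castRingHom ℚ)).natDegree = 2 := by
    rw [Polynomial.natDegree_map_eq_of_injective (fun a b h => by simpa using h)]; exact h2
  have hfne : f ≠ 0 := by rintro rfl; rw [zero_mul] at hfg; rw [hfg] at hm; simp at hm
  have hgne : g ≠ 0 := by rintro rfl; rw [mul_zero] at hfg; rw [hfg] at hm; simp at hm
  have hadd : f.natDegree + g.natDegree = 2 := by
    rw [← Polynomial.natDegree_mul hfne hgne, ← hfg, hm]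
  have hf1 : f.natDegree = 1 := by omega
  have ha : f.coeff 1 ≠ 0 := by
    have := Polynomial.leadingCoeff_ne_zero.mpr hfne
    rwa [Polynomial.leadingCoeff, hf1] at this
  set r : ℚ := -(f.coeff 0) / (f.coeff 1) with hrdef
  have hroot : f.eval r = 0 := by
    conv_lhs => rw [Polynomial.eq_X_add_C_of_natDegree_le_one (le_of_eq hf1)]
    simp [hrdef]
    field_simp
    ring
  have h0 : (p.map (Int.castRingHom ℚ)).eval r = 0 := by
    rw [hfg, Polynomial.eval_mul, hroot, zero_mul]
  rw [Polynomial.eval_eq_sum_range, hm] at h0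
  simp [Finset.sum_range_succ, Polynomial.coeff_map] at h0
  set n : ℤ := r.num with hn
  set b : ℤ := (r.den : ℤ) with hbdef
  have hb : 0 < b := by rw [hbdef]; exact_mod_cast r.pos
  have hbne : b ≠ 0 := hb.ne'
  have hbQ : ((b : ℚ)) ≠ 0 := by exact_mod_cast hbne
  have hnQ : (n : ℚ) = r * b := by
    rw [hn, hbdef]; push_cast; exact (Rat.mul_den_eq_num r).symm
  have key : ((p.coeff 0 * b ^ 2 + p.coeff 1 * n * b + p.coeff 2 * n ^ 2 : ℤ) : ℚ) = 0 := by
    push_cast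
    rw [hnQ]
    linear_combination (b : ℚ) ^ 2 * h0
  have hZ : p.coeff 0 * b ^ 2 + p.coeff 1 * n * b + p.coeff 2 * n ^ 2 = 0 := by exact_mod_cast key
  have hcop : IsCoprime b n := by
    rw [Int.isCoprime_iff_gcd_eq_one]
    have hred := r.reduced
    simpa [Int.gcd, hbdef, hn] using hred.symm
  have hc2 : p.coeff 2 ≠ 0 := by
    have := Polynomial.leadingCoeff_ne_zero.mpr hp0
    rwa [Polynomial.leadingCoeff, h2] at this
  have hdvd1 : b ∣ p.coeff 2 * n * n := ⟨-(p.coeff 0 * b + p.coeff 1 * n), by linear_combination hZ⟩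
  have hdvd2 : b ∣ p.coeff 2 := hcop.dvd_of_dvd_mul_right (hcop.dvd_of_dvd_mul_right hdvd1)
  set d : ℤ := p.coeff 2 / b with hddef
  have hd : b * d = p.coeff 2 := by rw [hddef, mul_comm]; exact Int.ediv_mul_cancel hdvd2
  have h4 : ((p.coeff 1 + n * d) * n - b * (-(p.coeff 0))) * b = 0 := by
    linear_combination hZ + n ^ 2 * hd
  have h4' : (p.coeff 1 + n * d) * n = b * (-(p.coeff 0)) := by
    rcases mul_eq_zero.mp h4 with h | h
    · linarith [sub_eq_zero.mp h]
    · exact absurd h hbne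
  have hdvd3 : b ∣ (p.coeff 1 + n * d) := hcop.dvd_of_dvd_mul_right ⟨-(p.coeff 0), h4'⟩
  set e : ℤ := (p.coeff 1 + n * d) / b with hedef
  have he : b * e = p.coeff 1 + n * d := by rw [hedef, mul_comm]; exact Int.ediv_mul_cancel hdvd3
  have hdne : d ≠ 0 := by intro h; apply hc2; rw [← hd, h, mul_zero]
  refine ⟨(b, -n, d, e), hb, hdne, hd, by dsimp; linarith [he], ?_⟩
  have hfin : (-n * e) * b = p.coeff 0 * b := by linear_combination (-n) * he - h4'
  exact mul_right_cancel₀ hbne hfin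
-- counting part, to be appended
noncomputable def fib1 (Q b : ℕ) : Finset (ℤ × ℤ × ℤ) :=
  (Finset.Icc (-(b:ℤ)) (b:ℤ)) ×ˢ (Finset.Icc (-((Q:ℤ)/(b:ℤ))) ((Q:ℤ)/(b:ℤ))) ×ˢ
    (Finset.Icc (-((2*Q:ℤ)/(b:ℤ))) ((2*Q:ℤ)/(b:ℤ)))

noncomputable def fib2 (Q b : ℕ) : Finset (ℤ × ℤ × ℤ) :=
  ((Finset.Icc (-(Q:ℤ)) (Q:ℤ)).filter (fun c => (b:ℤ) < |c|)).biUnion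
    (fun c => ({c} : Finset ℤ) ×ˢ (Finset.Icc (-((2*Q:ℤ)/|c|)) ((2*Q:ℤ)/|c|)) ×ˢ
      (Finset.Icc (-((Q:ℤ)/|c|)) ((Q:ℤ)/|c|)))

noncomputable def TT (Q : ℕ) : Finset (ℤ × ℤ × ℤ × ℤ) :=
  (Finset.Icc 1 Q).biUnion (fun b => ({(b:ℤ)} : Finset ℤ) ×ˢ (fib1 Q b ∪ fib2 Q b))

lemma good_mem (Q : ℕ) (p : Polynomial ℤ) (hh : ∀ i, |p.coeff i| ≤ (Q:ℤ))
    (t : ℤ×ℤ×ℤ×ℤ) (ht : Good p t) : t ∈ TT Q := by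
  obtain ⟨b, c, d, e⟩ := t
  obtain ⟨hb1, hdne, hbd, hbe, hce⟩ := ht
  simp only at hb1 hdne hbd hbe hce
  have hb0 : (0:ℤ) < b := hb1
  have h1d : 1 ≤ |d| := Int.one_le_abs hdne
  have hd0 : 0 ≤ |d| := abs_nonneg d
  have hbd' : b * |d| ≤ (Q:ℤ) := by
    calc b * |d| = |b| * |d| := by rw [abs_of_pos hb0]
    _ = |b*d| := (abs_mul b d).symm
    _ = |p.coeff 2| := by rw [hbd]
    _ ≤ (Q:ℤ) := hh 2
  have hbQ : b ≤ (Q:ℤ) := le_trans (by nlinarith) hbd'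
  have hcd1 : b * e = p.coeff 1 - c * d := by linarith
  have hcQ : |c| ≤ (Q:ℤ) := by
    rcases eq_or_ne e 0 with he0 | he0
    · subst he0
      rw [mul_zero, zero_add] at hbe
      calc |c| ≤ |c| * |d| := by nlinarith [abs_nonneg c]
      _ = |c*d| := (abs_mul c d).symm
      _ = |p.coeff 1| := by rw [hbe]
      _ ≤ (Q:ℤ) := hh 1
    · have h1e : 1 ≤ |e| := Int.one_le_abs he0
      calc |c| ≤ |c| * |e| := by nlinarith [abs_nonneg c]
      _ = |c*e| := (abs_mul c e).symm
      _ = |p.coeff 0| := by rw [hce]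
      _ ≤ (Q:ℤ) := hh 0
  rw [TT, Finset.mem_biUnion]
  have hbt : ((b.toNat : ℤ)) = b := Int.toNat_of_nonneg (by linarith)
  refine ⟨b.toNat, by rw [Finset.mem_Icc]; omega, ?_⟩
  rw [Finset.mem_product]
  refine ⟨by simpa using hbt, ?_⟩
  rw [Finset.mem_union]
  have habs1 : |p.coeff 1| ≤ (Q:ℤ) := hh 1
  have habs0 : |p.coeff 0| ≤ (Q:ℤ) := hh 0
  by_cases hcb : |c| ≤ b
  · left
    simp only [fib1, hbt, Finset.mem_product, Finset.mem_Icc]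
    have hdq : |d| ≤ (Q:ℤ)/b := (Int.le_ediv_iff_mul_le hb0).mpr (by linarith [mul_comm b |d|, mul_comm (|d|) b]; )
    have hbe' : |e| * b ≤ 2*(Q:ℤ) := by
      have h1 : b * |e| = |b*e| := by rw [abs_mul, abs_of_pos hb0]
      have h2 : |b*e| ≤ |p.coeff 1| + |c*d| := by
        rw [hcd1]; exact abs_sub (p.coeff 1) (c*d)
      have h3 : |c*d| ≤ b * |d| := by
        rw [abs_mul]; exact mul_le_mul_of_nonneg_right hcb hd0
      nlinarith
    have heq : |e| ≤ (2*Q:ℤ)/b := (Int.le_ediv_iff_mul_le hb0).mpr hbe'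
    exact ⟨abs_le.mp hcb, abs_le.mp hdq, abs_le.mp heq⟩
  · right
    push_neg at hcb
    have hc0 : (0:ℤ) < |c| := by linarith
    rw [fib2, Finset.mem_biUnion]
    refine ⟨c, by rw [Finset.mem_filter, Finset.mem_Icc, hbt]; exact ⟨abs_le.mp hcQ, hcb⟩, ?_⟩
    rw [Finset.mem_product]
    refine ⟨by simp, ?_⟩
    rw [Finset.mem_product]
    have he' : |e| * |c| ≤ (Q:ℤ) := by
      calc |e| * |c| = |c*e| := by rw [abs_mul, mul_comm]
      _ = |p.coeff 0| := by rw [hce]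
      _ ≤ (Q:ℤ) := habs0
    have hd' : |d| * |c| ≤ 2*(Q:ℤ) := by
      have h1 : |c*d| ≤ |p.coeff 1| + |b*e| := by
        have : c * d = p.coeff 1 - b*e := by linarith
        rw [this]; exact abs_sub _ _
      have h2 : |b*e| = b * |e| := by rw [abs_mul, abs_of_pos hb0]
      have h3 : b * |e| ≤ |c| * |e| := by
        apply mul_le_mul_of_nonneg_right (le_of_lt hcb) (abs_nonneg e)
      have h4 : |c| * |e| ≤ (Q:ℤ) := by linarith [he', mul_comm (|e|) (|c|)]
      have h5 : |c*d| = |d| * |c| := by rw [abs_mul, mul_comm]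
      linarith
    rw [Finset.mem_Icc, Finset.mem_Icc]
    exact ⟨(abs_le.mp ((Int.le_ediv_iff_mul_le hc0).mpr hd')),
      (abs_le.mp ((Int.le_ediv_iff_mul_le hc0).mpr he'))⟩

lemma harmonic_le (n : ℕ) : ∑ b ∈ Finset.Icc 1 n, (1:ℝ)/b ≤ 1 + Real.log n := by
  induction n with
  | zero => simp
  | succ n ih =>
    rw [Finset.sum_Icc_succ_top (by omega)]
    rcases Nat.eq_zero_or_pos n with h | h
    · subst h; norm_num
    have h1 : (0:ℝ) < n := by exact_mod_cast h
    have h2 : (0:ℝ) < (n:ℝ) + 1 := by linarith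
    have key : Real.log n - Real.log (n+1) ≤ -(1/((n:ℝ)+1)) := by
      have hlog := Real.log_le_sub_one_of_pos (div_pos h1 h2)
      rw [Real.log_div h1.ne' h2.ne'] at hlog
      have : (n:ℝ)/((n:ℝ)+1) - 1 = -(1/((n:ℝ)+1)) := by field_simp; ring
      linarith
    have : Real.log ((n:ℝ)+1) = Real.log ((n+1 : ℕ) : ℝ) := by push_cast; ring_nf
    push_cast
    linarith

lemma invsq_le (b : ℕ) (hb : 1 ≤ b) (n : ℕ) :
    ∑ k ∈ Finset.Icc (b+1) n, (1:ℝ)/(k:ℝ)^2 ≤ 1/b := by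
  have hb' : (0:ℝ) < b := by exact_mod_cast hb
  rcases le_or_gt (b+1) n with h | h
  · have key : ∀ m : ℕ, b ≤ m → ∑ k ∈ Finset.Icc (b+1) m, (1:ℝ)/(k:ℝ)^2 ≤ 1/b - 1/m := by
      intro m hm
      induction m, hm using Nat.le_induction with
      | base => rw [Finset.Icc_eq_empty (by omega)]; simp
      | succ m hm ih =>
        rw [Finset.sum_Icc_succ_top (by omega)]
        have hm' : (0:ℝ) < m := by have : 1 ≤ m := le_trans hb hm; exact_mod_cast this
        have hm1 : (0:ℝ) < (m:ℝ)+1 := by linarith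
        have : (1:ℝ)/((m:ℝ)+1)^2 ≤ 1/m - 1/((m:ℝ)+1) := by
          rw [div_sub_div _ _ hm'.ne' hm1.ne']
          rw [div_le_div_iff₀ (by positivity) (by positivity)]
          ring_nf; nlinarith
        push_cast
        linarith
    have hkey := key n (by omega)
    have hn1 : 1 ≤ n := by omega
    have hn' : (0:ℝ) < n := by exact_mod_cast hn1
    have hpos : (0:ℝ) < 1/n := by positivity
    linarith
  · rw [Finset.Icc_eq_empty (by omega)]
    simp
lemma cardIcc_le (x : ℤ) (hx : 0 ≤ x) : ((Finset.Icc (-x) x).card : ℝ) ≤ 2*(x:ℝ)+1 := by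
  rw [Int.card_Icc]
  have h0 : (0:ℤ) ≤ x + 1 - -x := by linarith
  have h1 : (((x + 1 - -x).toNat : ℤ) : ℝ) = ((x+1 - -x : ℤ) : ℝ) := by rw [Int.toNat_of_nonneg h0]
  push_cast at h1 ⊢
  linarith

lemma ediv_le_real (a b : ℤ) (hb : 0 < b) : ((a / b : ℤ) : ℝ) ≤ (a:ℝ)/(b:ℝ) := by
  rw [le_div_iff₀ (by exact_mod_cast hb)]
  exact_mod_cast Int.ediv_mul_le a hb.ne'

lemma fib1_card (Q b : ℕ) (hb : 1 ≤ b) (hbQ : b ≤ Q) :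
    ((fib1 Q b).card : ℝ) ≤ 45 * (Q:ℝ)^2 / b := by
  have hb0 : (0:ℤ) < (b:ℤ) := by exact_mod_cast hb
  have hbr : (0:ℝ) < (b:ℝ) := by exact_mod_cast hb
  have hbr1 : (1:ℝ) ≤ (b:ℝ) := by exact_mod_cast hb
  have hQr : (b:ℝ) ≤ (Q:ℝ) := by exact_mod_cast hbQ
  have hqb1 : (1:ℝ) ≤ (Q:ℝ)/b := by rw [le_div_iff₀ hbr]; linarith
  have hQ0 : (0:ℝ) ≤ (Q:ℝ) := by positivity
  have c1 : ((Finset.Icc (-(b:ℤ)) (b:ℤ)).card : ℝ) ≤ 3*(b:ℝ) := by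
    have h := cardIcc_le (b:ℤ) (by positivity)
    push_cast at h; linarith
  have c2 : ((Finset.Icc (-((Q:ℤ)/(b:ℤ))) ((Q:ℤ)/(b:ℤ))).card : ℝ) ≤ 3*((Q:ℝ)/b) := by
    have h1 := cardIcc_le ((Q:ℤ)/(b:ℤ)) (Int.ediv_nonneg (by positivity) (le_of_lt hb0))
    have h2 := ediv_le_real (Q:ℤ) (b:ℤ) hb0
    push_cast at h1 h2
    linarith
  have c3 : ((Finset.Icc (-((2*Q:ℤ)/(b:ℤ))) ((2*Q:ℤ)/(b:ℤ))).card : ℝ) ≤ 5*((Q:ℝ)/b) := by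
    have h1 := cardIcc_le ((2*Q:ℤ)/(b:ℤ)) (Int.ediv_nonneg (by positivity) (le_of_lt hb0))
    have h2 := ediv_le_real (2*Q:ℤ) (b:ℤ) hb0
    push_cast at h1 h2
    have : (2*(Q:ℝ))/(b:ℝ) = 2*((Q:ℝ)/b) := by ring
    linarith [this ▸ h2]
  have hprod : ((fib1 Q b).card : ℝ) =
      ((Finset.Icc (-(b:ℤ)) (b:ℤ)).card : ℝ) *
      (((Finset.Icc (-((Q:ℤ)/(b:ℤ))) ((Q:ℤ)/(b:ℤ))).card : ℝ) *
       ((Finset.Icc (-((2*Q:ℤ)/(b:ℤ))) ((2*Q:ℤ)/(b:ℤ))).card : ℝ)) := by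
    rw [fib1, Finset.card_product, Finset.card_product]; push_cast; ring
  have hfin : 3*(b:ℝ) * (3*((Q:ℝ)/b) * (5*((Q:ℝ)/b))) = 45 * (Q:ℝ)^2 / b := by
    field_simp; ring
  rw [hprod, ← hfin]
  apply mul_le_mul c1 (mul_le_mul c2 c3 (by positivity) (by positivity)) (by positivity) (by positivity)

lemma fib2_card (Q b : ℕ) (hb : 1 ≤ b) (hbQ : b ≤ Q) :
    ((fib2 Q b).card : ℝ) ≤ 30 * (Q:ℝ)^2 / b := by
  classical
  have hbr : (0:ℝ) < (b:ℝ) := by exact_mod_cast hb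
  have hQ0 : (0:ℝ) ≤ (Q:ℝ) := by positivity
  set Cset := (Finset.Icc (-(Q:ℤ)) (Q:ℤ)).filter (fun c => (b:ℤ) < |c|) with hCdef
  set F : ℤ → Finset (ℤ × ℤ × ℤ) := fun c => ({c} : Finset ℤ) ×ˢ
      (Finset.Icc (-((2*Q:ℤ)/|c|)) ((2*Q:ℤ)/|c|)) ×ˢ
      (Finset.Icc (-((Q:ℤ)/|c|)) ((Q:ℤ)/|c|)) with hFdef
  have step1 : ((fib2 Q b).card : ℝ) ≤ ∑ c ∈ Cset, ((F c).card : ℝ) := by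
    have h := Finset.card_biUnion_le (s := Cset) (t := F)
    rw [fib2]
    exact_mod_cast h
  have point : ∀ c ∈ Cset, ((F c).card : ℝ) ≤ 15*(Q:ℝ)^2/(c:ℝ)^2 := by
    intro c hc
    rw [hCdef, Finset.mem_filter, Finset.mem_Icc] at hc
    obtain ⟨⟨hc1, hc2⟩, hc3⟩ := hc
    have hc0 : (0:ℤ) < |c| := lt_of_le_of_lt (by positivity) hc3
    have hcQ : |c| ≤ (Q:ℤ) := abs_le.mpr ⟨hc1, hc2⟩
    have hcr : (0:ℝ) < |(c:ℝ)| := by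
      have : ((|c| : ℤ):ℝ) = |(c:ℝ)| := by push_cast [Int.cast_abs]; ring
      rw [← this]; exact_mod_cast hc0
    have hcar : ((|c| : ℤ):ℝ) = |(c:ℝ)| := by push_cast [Int.cast_abs]; ring
    have hq1 : (1:ℝ) ≤ (Q:ℝ)/|(c:ℝ)| := by
      rw [le_div_iff₀ hcr]
      have : ((|c|:ℤ):ℝ) ≤ (Q:ℝ) := by exact_mod_cast hcQ
      rw [hcar] at this; linarith
    have d1 : ((Finset.Icc (-((2*Q:ℤ)/|c|)) ((2*Q:ℤ)/|c|)).card : ℝ) ≤ 5*((Q:ℝ)/|(c:ℝ)|) := by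
      have h1 := cardIcc_le ((2*Q:ℤ)/|c|) (Int.ediv_nonneg (by positivity) (le_of_lt hc0))
      have h2 := ediv_le_real (2*Q:ℤ) |c| hc0
      rw [hcar] at h2
      push_cast at h1 h2
      have : (2*(Q:ℝ))/|(c:ℝ)| = 2*((Q:ℝ)/|(c:ℝ)|) := by ring
      linarith [this ▸ h2]
    have d2 : ((Finset.Icc (-((Q:ℤ)/|c|)) ((Q:ℤ)/|c|)).card : ℝ) ≤ 3*((Q:ℝ)/|(c:ℝ)|) := by
      have h1 := cardIcc_le ((Q:ℤ)/|c|) (Int.ediv_nonneg (by positivity) (le_of_lt hc0))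
      have h2 := ediv_le_real (Q:ℤ) |c| hc0
      rw [hcar] at h2
      push_cast at h1 h2
      linarith
    have hcardF : ((F c).card : ℝ) =
        ((Finset.Icc (-((2*Q:ℤ)/|c|)) ((2*Q:ℤ)/|c|)).card : ℝ) *
        ((Finset.Icc (-((Q:ℤ)/|c|)) ((Q:ℤ)/|c|)).card : ℝ) := by
      rw [hFdef]; simp [Finset.card_product]
    have hsq : |(c:ℝ)|^2 = (c:ℝ)^2 := sq_abs _
    have hfin : 5*((Q:ℝ)/|(c:ℝ)|) * (3*((Q:ℝ)/|(c:ℝ)|)) = 15*(Q:ℝ)^2/(c:ℝ)^2 := by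
      rw [← hsq]; field_simp; ring
    rw [hcardF, ← hfin]
    exact mul_le_mul d1 d2 (by positivity) (by positivity)
  have step2 : ((fib2 Q b).card : ℝ) ≤ ∑ c ∈ Cset, 15*(Q:ℝ)^2/(c:ℝ)^2 :=
    le_trans step1 (Finset.sum_le_sum point)
  -- now bound the sum over Cset
  set A := (Finset.Icc (b+1) Q).image (fun k : ℕ => (k:ℤ)) with hAdef
  set B := (Finset.Icc (b+1) Q).image (fun k : ℕ => -(k:ℤ)) with hBdef
  have hsub : Cset ⊆ A ∪ B := by
    intro c hc
    rw [hCdef, Finset.mem_filter, Finset.mem_Icc] at hc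
    obtain ⟨⟨hc1, hc2⟩, hc3⟩ := hc
    rw [Finset.mem_union, hAdef, hBdef]
    rcases le_or_gt 0 c with h | h
    · left
      rw [Finset.mem_image]
      refine ⟨c.toNat, ?_, by omega⟩
      rw [Finset.mem_Icc]
      rw [abs_of_nonneg h] at hc3
      omega
    · right
      rw [Finset.mem_image]
      refine ⟨(-c).toNat, ?_, by omega⟩
      rw [Finset.mem_Icc]
      rw [abs_of_neg h] at hc3
      omega
  have hdisj : Disjoint A B := by
    rw [Finset.disjoint_left]
    intro a ha hb'
    rw [hAdef, Finset.mem_image] at ha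
    rw [hBdef, Finset.mem_image] at hb'
    obtain ⟨k, hk, rfl⟩ := ha
    obtain ⟨k', hk', he⟩ := hb'
    rw [Finset.mem_Icc] at hk hk'
    omega
  have hnn : ∀ c ∈ A ∪ B, c ∉ Cset → (0:ℝ) ≤ 15*(Q:ℝ)^2/(c:ℝ)^2 := by
    intro c _ _; positivity
  have step3 : ∑ c ∈ Cset, 15*(Q:ℝ)^2/(c:ℝ)^2 ≤ ∑ c ∈ A ∪ B, 15*(Q:ℝ)^2/(c:ℝ)^2 :=
    Finset.sum_le_sum_of_subset_of_nonneg hsub hnn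
  have sumA : ∑ c ∈ A, 15*(Q:ℝ)^2/(c:ℝ)^2 = ∑ k ∈ Finset.Icc (b+1) Q, 15*(Q:ℝ)^2/(k:ℝ)^2 := by
    rw [hAdef, Finset.sum_image (by intro x _ y _ h; simp only at h; exact_mod_cast h)]
    apply Finset.sum_congr rfl; intro k _; push_cast; ring
  have sumB : ∑ c ∈ B, 15*(Q:ℝ)^2/(c:ℝ)^2 = ∑ k ∈ Finset.Icc (b+1) Q, 15*(Q:ℝ)^2/(k:ℝ)^2 := by
    rw [hBdef, Finset.sum_image (by intro x _ y _ h; simp only at h; omega)]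
    apply Finset.sum_congr rfl; intro k _; push_cast; ring
  have sumk : ∑ k ∈ Finset.Icc (b+1) Q, 15*(Q:ℝ)^2/(k:ℝ)^2 ≤ 15*(Q:ℝ)^2/b := by
    have h := invsq_le b hb Q
    have h2 : ∑ k ∈ Finset.Icc (b+1) Q, 15*(Q:ℝ)^2/(k:ℝ)^2
        = 15*(Q:ℝ)^2 * ∑ k ∈ Finset.Icc (b+1) Q, (1:ℝ)/(k:ℝ)^2 := by
      rw [Finset.mul_sum]; apply Finset.sum_congr rfl; intro k _; ring
    rw [h2]
    calc 15*(Q:ℝ)^2 * ∑ k ∈ Finset.Icc (b+1) Q, (1:ℝ)/(k:ℝ)^2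
        ≤ 15*(Q:ℝ)^2 * (1/b) := by
          apply mul_le_mul_of_nonneg_left h (by positivity)
    _ = 15*(Q:ℝ)^2/b := by ring
  calc ((fib2 Q b).card : ℝ) ≤ ∑ c ∈ A ∪ B, 15*(Q:ℝ)^2/(c:ℝ)^2 := le_trans step2 step3
  _ = ∑ c ∈ A, 15*(Q:ℝ)^2/(c:ℝ)^2 + ∑ c ∈ B, 15*(Q:ℝ)^2/(c:ℝ)^2 := Finset.sum_union hdisj
  _ ≤ 15*(Q:ℝ)^2/b + 15*(Q:ℝ)^2/b := by rw [sumA, sumB]; linarith [sumk]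
  _ = 30 * (Q:ℝ)^2 / b := by ring
theorem count_reducible_deg_two_upper :
    ∃ c : ℝ, ∀ Q : ℕ, 2 ≤ Q →
      (Set.ncard {p : Polynomial ℤ | p.natDegree = 2 ∧ polyHeight p ≤ Q ∧
          ReducibleOverQ p} : ℝ) ≤ c * (Q : ℝ) ^ 2 * Real.log Q := by
  classical
  refine ⟨225, ?_⟩
  intro Q hQ
  set S := {p : Polynomial ℤ | p.natDegree = 2 ∧ polyHeight p ≤ Q ∧ ReducibleOverQ p} with hS
  have hmem : ∀ p ∈ S, p.natDegree = 2 ∧ polyHeight p ≤ Q ∧ ReducibleOverQ p := fun p hp => hp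
  have hcoeff : ∀ p ∈ S, ∀ i, |p.coeff i| ≤ (Q:ℤ) := by
    intro p hp i
    by_cases h : p.coeff i = 0
    · rw [h]; simp
    · have h1 : (p.coeff i).natAbs ≤ polyHeight p :=
        Finset.le_sup (f := fun i => (p.coeff i).natAbs) (Polynomial.mem_support_iff.mpr h)
      have h2 := le_trans h1 (hmem p hp).2.1
      rw [Int.abs_eq_natAbs]; exact_mod_cast h2
  set Φ : Polynomial ℤ → ℤ×ℤ×ℤ×ℤ := fun p => if h : ∃ t, Good p t then h.choose else 0 with hPhi
  have hgood : ∀ p ∈ S, Good p (Φ p) := by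
    intro p hp
    have hex : ∃ t, Good p t := exists_good p (hmem p hp).1 (hmem p hp).2.2
    rw [hPhi]; simp only [dif_pos hex]; exact hex.choose_spec
  have hmaps : ∀ p ∈ S, Φ p ∈ (TT Q : Set (ℤ×ℤ×ℤ×ℤ)) := fun p hp =>
    Finset.mem_coe.mpr (good_mem Q p (hcoeff p hp) _ (hgood p hp))
  have hinj : S.InjOn Φ := by
    intro p hp q hq h
    have g1 := hgood p hp
    have g2 := hgood q hq
    rw [h] at g1
    obtain ⟨_, _, hbd1, hbe1, hce1⟩ := g1
    obtain ⟨_, _, hbd2, hbe2, hce2⟩ := g2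
    have e2 : p.coeff 2 = q.coeff 2 := by rw [← hbd1, ← hbd2]
    have e1 : p.coeff 1 = q.coeff 1 := by rw [← hbe1, ← hbe2]
    have e0 : p.coeff 0 = q.coeff 0 := by rw [← hce1, ← hce2]
    ext n
    match n with
    | 0 => exact e0
    | 1 => exact e1
    | 2 => exact e2
    | (n+3) =>
      rw [Polynomial.coeff_eq_zero_of_natDegree_lt (by rw [(hmem p hp).1]; omega),
          Polynomial.coeff_eq_zero_of_natDegree_lt (by rw [(hmem q hq).1]; omega)]
  have hcard : (S.ncard : ℝ) ≤ ((TT Q).card : ℝ) := by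
    have := Set.ncard_le_ncard_of_injOn Φ hmaps hinj (Finset.finite_toSet _)
    rw [Set.ncard_coe_finset] at this
    exact_mod_cast this
  have hTTnat : (TT Q).card ≤ ∑ b ∈ Finset.Icc 1 Q, ((fib1 Q b).card + (fib2 Q b).card) := by
    refine le_trans (Finset.card_biUnion_le) (Finset.sum_le_sum ?_)
    intro b _
    rw [Finset.card_product, Finset.card_singleton, one_mul]
    exact Finset.card_union_le _ _
  have hTT : ((TT Q).card : ℝ) ≤ ∑ b ∈ Finset.Icc 1 Q, (75 * (Q:ℝ)^2 / b) := by
    calc ((TT Q).card : ℝ)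
        ≤ ((∑ b ∈ Finset.Icc 1 Q, ((fib1 Q b).card + (fib2 Q b).card) : ℕ) : ℝ) := by
          exact_mod_cast hTTnat
    _ = ∑ b ∈ Finset.Icc 1 Q, (((fib1 Q b).card : ℝ) + ((fib2 Q b).card : ℝ)) := by push_cast; ring
    _ ≤ ∑ b ∈ Finset.Icc 1 Q, (75 * (Q:ℝ)^2 / b) := by
        apply Finset.sum_le_sum
        intro b hb
        rw [Finset.mem_Icc] at hb
        have h1 := fib1_card Q b hb.1 hb.2
        have h2 := fib2_card Q b hb.1 hb.2
        have : 45 * (Q:ℝ)^2 / b + 30 * (Q:ℝ)^2 / b = 75 * (Q:ℝ)^2 / b := by ring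
        linarith
  have hharm : ∑ b ∈ Finset.Icc 1 Q, (75 * (Q:ℝ)^2 / b) ≤ 75 * (Q:ℝ)^2 * (1 + Real.log Q) := by
    have h1 : ∑ b ∈ Finset.Icc 1 Q, (75 * (Q:ℝ)^2 / b)
        = 75 * (Q:ℝ)^2 * ∑ b ∈ Finset.Icc 1 Q, (1:ℝ)/b := by
      rw [Finset.mul_sum]; apply Finset.sum_congr rfl; intro b _; ring
    rw [h1]
    exact mul_le_mul_of_nonneg_left (harmonic_le Q) (by positivity)
  have hlog : 1 + Real.log Q ≤ 3 * Real.log Q := by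
    have h2 : (2:ℝ) ≤ (Q:ℝ) := by exact_mod_cast hQ
    have := Real.log_le_log (by norm_num : (0:ℝ) < 2) h2
    have hl2 := Real.log_two_gt_d9
    linarith
  calc (S.ncard : ℝ) ≤ ∑ b ∈ Finset.Icc 1 Q, (75 * (Q:ℝ)^2 / b) := le_trans hcard hTT
  _ ≤ 75 * (Q:ℝ)^2 * (1 + Real.log Q) := hharm
  _ ≤ 75 * (Q:ℝ)^2 * (3 * Real.log Q) := by
      apply mul_le_mul_of_nonneg_left hlog (by positivity)
  _ = 225 * (Q:ℝ)^2 * Real.log Q := by ring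
end
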